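/- (Theorem 3) Fix s with x₂(s)² + x₃(s)² ≠ 0, let N̄(s) = (x₂(s)V(s) − x₃(s)U(s))/√(x₂(s)² + x₃(s)²) and τ_g(s) = ⟪N̄(s) × N̄'(s), T'(s)⟫. Then τ_g(s) = 0 if and only if sin 2θ(s)·(x₃(s)² − x₂(s)²) = 2 cos 2θ(s)·x₂(s)x₃(s); in particular, if x₃(s)² ≠ x₂(s)² and cos 2θ(s) ≠ 0, the base curve has vanishing geodesic torsion at s if and only if tan 2θ(s) = 2x₂(s)x₃(s)/(x₃(s)² − x₂(s)²). -/

import Mathlib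

open Real
open scoped RealInnerProductSpace

/-- The cross product on `ℝ³ = EuclideanSpace ℝ (Fin 3)`. -/
noncomputable def cross3 (a b : EuclideanSpace ℝ (Fin 3)) : EuclideanSpace ℝ (Fin 3) :=
  WithLp.toLp 2 (crossProduct a b)

lemma cross3_smul_left (r : ℝ) (a b : EuclideanSpace ℝ (Fin 3)) :
    cross3 (r • a) b = r • cross3 a b := by simp [cross3]

lemma cross3_smul_right (r : ℝ) (a b : EuclideanSpace ℝ (Fin 3)) :
    cross3 a (r • b) = r • cross3 a b := by simp [cross3]

lemma cross3_add_left (a a' b : EuclideanSpace ℝ (Fin 3)) :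
    cross3 (a + a') b = cross3 a b + cross3 a' b := by simp [cross3]

lemma cross3_add_right (a b b' : EuclideanSpace ℝ (Fin 3)) :
    cross3 a (b + b') = cross3 a b + cross3 a b' := by simp [cross3]

lemma cross3_sub_left (a a' b : EuclideanSpace ℝ (Fin 3)) :
    cross3 (a - a') b = cross3 a b - cross3 a' b := by simp [cross3]

lemma cross3_sub_right (a b b' : EuclideanSpace ℝ (Fin 3)) :
    cross3 a (b - b') = cross3 a b - cross3 a b' := by simp [cross3]

lemma cross3_anticomm (a b : EuclideanSpace ℝ (Fin 3)) :
    cross3 a b = - cross3 b a := by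
  unfold cross3; rw [← WithLp.toLp_neg, cross_anticomm]

lemma cross3_self (a : EuclideanSpace ℝ (Fin 3)) : cross3 a a = 0 := by simp [cross3]

theorem rmf_line_of_curvature_iff
    (r T U V : ℝ → EuclideanSpace ℝ (Fin 3)) (κ θ x₁ x₂ x₃ : ℝ → ℝ)
    (hr : ContDiff ℝ (⊤ : ℕ∞) r) (hκsm : ContDiff ℝ (⊤ : ℕ∞) κ) (hθsm : ContDiff ℝ (⊤ : ℕ∞) θ)
    (hTsm : ContDiff ℝ (⊤ : ℕ∞) T) (hUsm : ContDiff ℝ (⊤ : ℕ∞) U) (hVsm : ContDiff ℝ (⊤ : ℕ∞) V)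
    (hx₁sm : ContDiff ℝ (⊤ : ℕ∞) x₁) (hx₂sm : ContDiff ℝ (⊤ : ℕ∞) x₂) (hx₃sm : ContDiff ℝ (⊤ : ℕ∞) x₃)
    (hκpos : ∀ s, 0 < κ s)
    (hunit : ∀ s, ‖deriv r s‖ = 1)
    (hT : ∀ s, T s = deriv r s)
    (hTnorm : ∀ s, ‖T s‖ = 1) (hUnorm : ∀ s, ‖U s‖ = 1) (hVnorm : ∀ s, ‖V s‖ = 1)
    (hTU : ∀ s, ⟪T s, U s⟫ = 0) (hTV : ∀ s, ⟪T s, V s⟫ = 0) (hUV : ∀ s, ⟪U s, V s⟫ = 0)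
    (hTUV : ∀ s, cross3 (T s) (U s) = V s)
    (hUVT : ∀ s, cross3 (U s) (V s) = T s)
    (hVTU : ∀ s, cross3 (V s) (T s) = U s)
    (hT' : ∀ s, deriv T s = (κ s * Real.cos (θ s)) • U s - (κ s * Real.sin (θ s)) • V s)
    (hU' : ∀ s, deriv U s = (-(κ s * Real.cos (θ s))) • T s)
    (hV' : ∀ s, deriv V s = (κ s * Real.sin (θ s)) • T s)
    (X : ℝ → EuclideanSpace ℝ (Fin 3))
    (hX : ∀ s, X s = x₁ s • T s + x₂ s • U s + x₃ s • V s)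
    (Nb : ℝ → EuclideanSpace ℝ (Fin 3))
    (hNb : ∀ s, Nb s = (Real.sqrt (x₂ s ^ 2 + x₃ s ^ 2))⁻¹ • (x₂ s • V s - x₃ s • U s))
    (s : ℝ) (hne : x₂ s ^ 2 + x₃ s ^ 2 ≠ 0)
    (τg : ℝ)
    (hτg : τg = ⟪cross3 (Nb s) (deriv Nb s), deriv T s⟫)
    : (τg = 0 ↔ Real.sin (2 * θ s) * (x₃ s ^ 2 - x₂ s ^ 2) = 2 * Real.cos (2 * θ s) * (x₂ s * x₃ s))
      ∧ (x₃ s ^ 2 ≠ x₂ s ^ 2 → Real.cos (2 * θ s) ≠ 0 →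
        (τg = 0 ↔ Real.tan (2 * θ s) = 2 * x₂ s * x₃ s / (x₃ s ^ 2 - x₂ s ^ 2))) := by
  have hwpos : (0:ℝ) < x₂ s ^ 2 + x₃ s ^ 2 := lt_of_le_of_ne (by positivity) (Ne.symm hne)
  have hsqpos : (0:ℝ) < Real.sqrt (x₂ s ^ 2 + x₃ s ^ 2) := Real.sqrt_pos.2 hwpos
  have hdU : Differentiable ℝ U := hUsm.differentiable (by simp)
  have hdV : Differentiable ℝ V := hVsm.differentiable (by simp)
  have hdx₂ : Differentiable ℝ x₂ := hx₂sm.differentiable (by simp)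
  have hdx₃ : Differentiable ℝ x₃ := hx₃sm.differentiable (by simp)
  have hWdiff : DifferentiableAt ℝ (fun t => x₂ t • V t - x₃ t • U t) s :=
    ((hdx₂ s).smul (hdV s)).sub ((hdx₃ s).smul (hdU s))
  have hcdiff : DifferentiableAt ℝ (fun t => (Real.sqrt (x₂ t ^ 2 + x₃ t ^ 2))⁻¹) s :=
    (((((hdx₂ s).pow 2).add ((hdx₃ s).pow 2)).sqrt hne).inv hsqpos.ne')
  set c : ℝ := (Real.sqrt (x₂ s ^ 2 + x₃ s ^ 2))⁻¹ with hc
  set d : ℝ := deriv (fun t => (Real.sqrt (x₂ t ^ 2 + x₃ t ^ 2))⁻¹) s with hd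
  have hNbfun : Nb = fun t => (Real.sqrt (x₂ t ^ 2 + x₃ t ^ 2))⁻¹ • (x₂ t • V t - x₃ t • U t) :=
    funext hNb
  have hWderiv : deriv (fun t => x₂ t • V t - x₃ t • U t) s
      = (x₂ s • deriv V s + deriv x₂ s • V s) - (x₃ s • deriv U s + deriv x₃ s • U s) := by
    rw [deriv_fun_sub (f := fun t => x₂ t • V t) (g := fun t => x₃ t • U t) ((hdx₂ s).smul (hdV s)) ((hdx₃ s).smul (hdU s)),
      deriv_fun_smul (hdx₂ s) (hdV s), deriv_fun_smul (hdx₃ s) (hdU s)]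
  have hNd : deriv Nb s
      = c • ((x₂ s • ((κ s * Real.sin (θ s)) • T s) + deriv x₂ s • V s)
            - (x₃ s • ((-(κ s * Real.cos (θ s))) • T s) + deriv x₃ s • U s))
        + d • (x₂ s • V s - x₃ s • U s) := by
    rw [hNbfun, deriv_fun_smul hcdiff hWdiff, hWderiv, hU' s, hV' s]
  have hVU : cross3 (V s) (U s) = -(T s) := by rw [cross3_anticomm, hUVT s]
  have hUT : cross3 (U s) (T s) = -(V s) := by rw [cross3_anticomm, hTUV s]
  have hTV' : cross3 (T s) (V s) = -(U s) := by rw [cross3_anticomm, hVTU s]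
  have hUU : ⟪U s, U s⟫ = 1 := by
    rw [real_inner_self_eq_norm_sq, hUnorm s]; norm_num
  have hVV : ⟪V s, V s⟫ = 1 := by
    rw [real_inner_self_eq_norm_sq, hVnorm s]; norm_num
  have hTT : ⟪T s, T s⟫ = 1 := by
    rw [real_inner_self_eq_norm_sq, hTnorm s]; norm_num
  have hUT0 : ⟪U s, T s⟫ = 0 := by rw [real_inner_comm]; exact hTU s
  have hVT0 : ⟪V s, T s⟫ = 0 := by rw [real_inner_comm]; exact hTV s
  have hVU0 : ⟪V s, U s⟫ = 0 := by rw [real_inner_comm]; exact hUV s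
  have key : τg = c ^ 2 * (κ s ^ 2 *
      ((x₂ s * Real.sin (θ s) + x₃ s * Real.cos (θ s))
        * (x₂ s * Real.cos (θ s) - x₃ s * Real.sin (θ s)))) := by
    rw [hτg, hNd, hNb s, hT' s]
    simp only [cross3_smul_left, cross3_smul_right, cross3_add_left, cross3_add_right,
      cross3_sub_left, cross3_sub_right, cross3_self, hUVT s, hVTU s, hTUV s, hVU, hUT, hTV',
      smul_neg, smul_smul, inner_add_left, inner_sub_left, inner_add_right, inner_sub_right,
      inner_smul_left, inner_smul_right, inner_neg_left, inner_neg_right, smul_zero, inner_zero_left,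
      hUU, hVV, hTT, hUT0, hVT0, hVU0, hTU s, hTV s, hUV s, starRingEnd_apply, star_trivial]
    ring
  have hc2 : c ^ 2 = (x₂ s ^ 2 + x₃ s ^ 2)⁻¹ := by
    rw [hc, inv_pow, sq, Real.mul_self_sqrt hwpos.le]
  have pyth := Real.sin_sq_add_cos_sq (θ s)
  have hfactor : τg = -(c ^ 2 * κ s ^ 2 / 2) *
      (Real.sin (2 * θ s) * (x₃ s ^ 2 - x₂ s ^ 2) - 2 * Real.cos (2 * θ s) * (x₂ s * x₃ s)) := by
    rw [key, Real.sin_two_mul, Real.cos_two_mul]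
    linear_combination (-(c ^ 2 * κ s ^ 2 * (x₂ s * x₃ s))) * pyth
  have hcpos : 0 < c := inv_pos.2 hsqpos
  have hKne : -(c ^ 2 * κ s ^ 2 / 2) ≠ 0 := by
    have : (0:ℝ) < c ^ 2 * κ s ^ 2 / 2 :=
      div_pos (mul_pos (pow_pos hcpos 2) (pow_pos (hκpos s) 2)) two_pos
    exact neg_ne_zero.2 this.ne'
  have hmain : τg = 0 ↔
      Real.sin (2 * θ s) * (x₃ s ^ 2 - x₂ s ^ 2) = 2 * Real.cos (2 * θ s) * (x₂ s * x₃ s) := by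
    rw [hfactor, mul_eq_zero, or_iff_right hKne, sub_eq_zero]
  refine ⟨hmain, fun h1 h2 => ?_⟩
  rw [hmain, Real.tan_eq_sin_div_cos, div_eq_div_iff h2 (sub_ne_zero.2 h1)]
  constructor <;> intro h <;> linear_combination h
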